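/- arXiv:1407.2898 — 3 statements merged into one kernel-verified Lean document; each statement's English description precedes it below -/
import Mathlib

section
/- Let θ₁,…,θ_k be real numbers, let d be a positive integer, and suppose positive integers m₁,…,m_n with associated indices j₁,…,j_n ∈ {1,…,k} satisfy: for each i ∈ {1,…,k}, the sum of m_l over those l with j_l = i equals d. Then Σ_{l=1}^{n} (⌊m_l θ_{j_l}⌋ + ⌈m_l θ_{j_l}⌉) ≤ d · Σ_{i=1}^{k} (⌊θ_i⌋ + ⌈θ_i⌉) + (dk − n). -/
open Finset

/-- The sum of Conley-Zehnder indices of the negative ends of a degree-`d` cover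
(covering orbits with rotation numbers `θ₁,…,θ_k` with multiplicities `m_l`
summing to `d` over each orbit) is bounded:
`Σ_l CZ(m_l, θ_{j_l}) ≤ d·Σ_i CZ(1, θ_i) + (dk − n)`. -/
theorem cz_negative_ends_upper_bound (k n d : ℕ) (hd : 0 < d) (θ : Fin k → ℝ)
    (m : Fin n → ℕ) (hm : ∀ l, 0 < m l) (j : Fin n → Fin k)
    (hsum : ∀ i : Fin k, ∑ l ∈ univ.filter (fun l => j l = i), m l = d) :
    ∑ l : Fin n, (⌊(m l : ℝ) * θ (j l)⌋ + ⌈(m l : ℝ) * θ (j l)⌉)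
      ≤ (d : ℤ) * ∑ i : Fin k, (⌊θ i⌋ + ⌈θ i⌉) + ((d : ℤ) * k - n) := by
  have key : ∀ l : Fin n,
      ⌊(m l : ℝ) * θ (j l)⌋ + ⌈(m l : ℝ) * θ (j l)⌉
        ≤ (m l : ℤ) * (⌊θ (j l)⌋ + ⌈θ (j l)⌉) + ((m l : ℤ) - 1) := by
    intro l
    have hml : (0 : ℝ) < (m l : ℝ) := by exact_mod_cast hm l
    have h1 : ⌊(m l : ℝ) * θ (j l)⌋ ≤ (m l : ℤ) * ⌊θ (j l)⌋ + (m l : ℤ) - 1 := by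
      have : (⌊(m l : ℝ) * θ (j l)⌋ : ℤ) < (m l : ℤ) * ⌊θ (j l)⌋ + (m l : ℤ) := by
        rw [Int.floor_lt]
        push_cast
        have := Int.lt_floor_add_one (θ (j l))
        nlinarith
      omega
    have h2 : ⌈(m l : ℝ) * θ (j l)⌉ ≤ (m l : ℤ) * ⌈θ (j l)⌉ := by
      rw [Int.ceil_le]
      push_cast
      have := Int.le_ceil (θ (j l))
      nlinarith
    linarith [h1, h2]
  have hfib : ∀ f : Fin k → ℤ,
      ∑ l : Fin n, (m l : ℤ) * f (j l) = ∑ i : Fin k, (d : ℤ) * f i := by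
    intro f
    rw [← Finset.sum_fiberwise (univ : Finset (Fin n)) j (fun l => (m l : ℤ) * f (j l))]
    refine Finset.sum_congr rfl fun i _ => ?_
    have : ∑ l ∈ univ.filter (fun l => j l = i), (m l : ℤ) * f (j l)
        = ∑ l ∈ univ.filter (fun l => j l = i), (m l : ℤ) * f i := by
      refine Finset.sum_congr rfl fun l hl => ?_
      rw [(Finset.mem_filter.mp hl).2]
    rw [this, ← Finset.sum_mul]
    congr 1
    exact_mod_cast hsum i
  have htot : ∑ l : Fin n, (m l : ℤ) = (d : ℤ) * k := by
    have := hfib (fun _ => 1)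
    simpa [mul_comm] using this
  calc ∑ l : Fin n, (⌊(m l : ℝ) * θ (j l)⌋ + ⌈(m l : ℝ) * θ (j l)⌉)
      ≤ ∑ l : Fin n, ((m l : ℤ) * (⌊θ (j l)⌋ + ⌈θ (j l)⌉) + ((m l : ℤ) - 1)) :=
        Finset.sum_le_sum fun l _ => key l
    _ = (∑ l : Fin n, (m l : ℤ) * (⌊θ (j l)⌋ + ⌈θ (j l)⌉)) + ((∑ l : Fin n, (m l : ℤ)) - n) := by
        rw [Finset.sum_add_distrib, Finset.sum_sub_distrib]
        simp
    _ = (d : ℤ) * (∑ i : Fin k, (⌊θ i⌋ + ⌈θ i⌉)) + ((d : ℤ) * k - n) := by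
        rw [hfib (fun i => ⌊θ i⌋ + ⌈θ i⌉), htot, Finset.mul_sum]
end

section
/- Let θ be a real number and d ≥ 1 an integer. Suppose w₊ ≤ d⌊(d+1)θ⌋, w₂ = ⌊θ⌋, and w₋ ≥ (d−1)(⌊dθ⌋ + 1), and suppose −1 + w₊ − 2d·w₂ − w₋ ≥ 0. Then ⌊(d+1)θ⌋ ≠ ⌊dθ⌋ + ⌊θ⌋. -/
/-- Steps 3-4 of the proof of Proposition 3.1: the writhe bounds
`w₊ ≤ d⌊(d+1)θ⌋`, `w₂ = ⌊θ⌋`, `w₋ ≥ (d−1)(⌊dθ⌋+1)` together with the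
adjunction inequality `−1 + w₊ − 2d·w₂ − w₋ ≥ 0` are incompatible with the
index-zero relation `⌊(d+1)θ⌋ = ⌊dθ⌋ + ⌊θ⌋`. -/
theorem bad_breaking_writhe (θ : ℝ) (d : ℕ) (hd : 1 ≤ d) (wp w2 wm : ℤ)
    (hwp : wp ≤ (d : ℤ) * ⌊((d : ℝ) + 1) * θ⌋) (hw2 : w2 = ⌊θ⌋)
    (hwm : wm ≥ ((d : ℤ) - 1) * (⌊(d : ℝ) * θ⌋ + 1))
    (hadj : -1 + wp - 2 * (d : ℤ) * w2 - wm ≥ 0) :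
    ⌊((d : ℝ) + 1) * θ⌋ ≠ ⌊(d : ℝ) * θ⌋ + ⌊θ⌋ := by
  intro h
  rw [h] at hwp
  have hdpos : (1 : ℤ) ≤ (d : ℤ) := by exact_mod_cast hd
  -- ⌊dθ⌋ < d * (⌊θ⌋ + 1)
  have h1 : ⌊(d : ℝ) * θ⌋ < (d : ℤ) * (⌊θ⌋ + 1) := by
    rw [Int.floor_lt]
    push_cast
    have := Int.lt_floor_add_one θ
    have hdp : (0 : ℝ) < (d : ℝ) := by positivity
    nlinarith
  nlinarith [hwp, hwm, hadj, h1]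
end

section
/- Let θ₁,…,θ_k ∈ ℝ, d ≥ 1, b ≥ 0, k ≥ 1 integers, n = d(k−1) + 1 + b, and θ₀ ∈ ℝ. Define CZ(m,θ) = ⌊mθ⌋ + ⌈mθ⌉. Suppose Ī = (k−1) + CZ(1,θ₀) − Σᵢ CZ(1,θᵢ) and I = (n−1) + CZ(d,θ₀) − Σ_l CZ(m_l, θ_{j_l}), where the positive integers m_l (l = 1,…,n) with labels j_l ∈ {1,…,k} satisfy Σ_{l: j_l = i} m_l = d for each i. Then I ≥ d·Ī + 2(1 − d + b). -/
open Finset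

private lemma cz_upper (m : ℕ) (hm : 0 < m) (θ : ℝ) :
    ⌊(m : ℝ) * θ⌋ + ⌈(m : ℝ) * θ⌉ ≤ (m : ℤ) * (⌊θ⌋ + ⌈θ⌉) + ((m : ℤ) - 1) := by
  have h1 : ⌈(m : ℝ) * θ⌉ ≤ (m : ℤ) * ⌈θ⌉ := by
    apply Int.ceil_le.mpr
    push_cast
    have := Int.le_ceil θ
    nlinarith [(Nat.cast_pos (α := ℝ)).mpr hm]
  have h2 : ⌊(m : ℝ) * θ⌋ < (m : ℤ) * ⌊θ⌋ + m := by
    apply Int.floor_lt.mpr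
    push_cast
    have := Int.lt_floor_add_one θ
    nlinarith [(Nat.cast_pos (α := ℝ)).mpr hm]
  linarith [h1, h2]

private lemma cz_lower (d : ℕ) (hd : 0 < d) (θ : ℝ) :
    (d : ℤ) * (⌊θ⌋ + ⌈θ⌉) - ((d : ℤ) - 1) ≤ ⌊(d : ℝ) * θ⌋ + ⌈(d : ℝ) * θ⌉ := by
  have h1 : (d : ℤ) * ⌊θ⌋ ≤ ⌊(d : ℝ) * θ⌋ := by
    apply Int.le_floor.mpr
    push_cast
    have := Int.floor_le θ
    nlinarith [(Nat.cast_pos (α := ℝ)).mpr hd]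
  have h2 : (d : ℤ) * ⌈θ⌉ - d < ⌈(d : ℝ) * θ⌉ := by
    apply Int.lt_ceil.mpr
    push_cast
    have := Int.ceil_lt_add_one θ
    nlinarith [(Nat.cast_pos (α := ℝ)).mpr hd]
  linarith [h1, h2]

private lemma fiber_sum {k n : ℕ} (j : Fin n → Fin k) (m : Fin n → ℕ) (d : ℕ)
    (hsum : ∀ i : Fin k, ∑ l ∈ univ.filter (fun l => j l = i), m l = d)
    (F : Fin k → ℤ) :
    ∑ l : Fin n, (m l : ℤ) * F (j l) = (d : ℤ) * ∑ i : Fin k, F i := by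
  rw [← Finset.sum_fiberwise univ j (fun l => (m l : ℤ) * F (j l)), Finset.mul_sum]
  refine Finset.sum_congr rfl fun i _ => ?_
  have : ∑ l ∈ univ.filter (fun l => j l = i), (m l : ℤ) * F (j l)
      = ∑ l ∈ univ.filter (fun l => j l = i), (m l : ℤ) * F i := by
    refine Finset.sum_congr rfl fun l hl => ?_
    rw [(Finset.mem_filter.mp hl).2]
  rw [this, ← Finset.sum_mul, ← Nat.cast_sum, hsum i, mul_comm]

/-- Lemma 2.2 (index estimate for genus-zero multiple covers with one positive
end), in terms of rotation numbers: if `ū` has index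
`Ī = (k−1) + CZ(1,θ₀) − Σᵢ CZ(1,θᵢ)` and its degree-`d` cover `u` has index
`I = (n−1) + CZ(d,θ₀) − Σ_l CZ(m_l, θ_{j_l})`, with `n = d(k−1) + 1 + b` and
the multiplicities over each negative orbit summing to `d`, then
`I ≥ d·Ī + 2(1 − d + b)`. Here `CZ(m,θ) = ⌊mθ⌋ + ⌈mθ⌉`. -/
theorem cover_index_estimate (k n d b : ℕ) (hd : 1 ≤ d) (hk : 1 ≤ k)
    (hn : n = d * (k - 1) + 1 + b) (θ₀ : ℝ) (θ : Fin k → ℝ)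
    (m : Fin n → ℕ) (hm : ∀ l, 0 < m l) (j : Fin n → Fin k)
    (hsum : ∀ i : Fin k, ∑ l ∈ univ.filter (fun l => j l = i), m l = d)
    (Ibar I : ℤ)
    (hIbar : Ibar = ((k : ℤ) - 1) + (⌊θ₀⌋ + ⌈θ₀⌉) - ∑ i : Fin k, (⌊θ i⌋ + ⌈θ i⌉))
    (hI : I = ((n : ℤ) - 1) + (⌊(d : ℝ) * θ₀⌋ + ⌈(d : ℝ) * θ₀⌉)
        - ∑ l : Fin n, (⌊(m l : ℝ) * θ (j l)⌋ + ⌈(m l : ℝ) * θ (j l)⌉)) :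
    I ≥ (d : ℤ) * Ibar + 2 * (1 - (d : ℤ) + b) := by
  have hB := cz_lower d hd θ₀
  have hT1 := fiber_sum j m d hsum (fun i => ⌊θ i⌋ + ⌈θ i⌉)
  have hT2 : ∑ l : Fin n, (m l : ℤ) * 1 = (d : ℤ) * (k : ℤ) := by
    rw [fiber_sum j m d hsum (fun _ => (1 : ℤ))]; simp
  have hSB : ∑ l : Fin n, (⌊(m l : ℝ) * θ (j l)⌋ + ⌈(m l : ℝ) * θ (j l)⌉)
      ≤ (d : ℤ) * (∑ i : Fin k, (⌊θ i⌋ + ⌈θ i⌉)) + ((d : ℤ) * k - n) := by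
    calc ∑ l : Fin n, (⌊(m l : ℝ) * θ (j l)⌋ + ⌈(m l : ℝ) * θ (j l)⌉)
        ≤ ∑ l : Fin n, ((m l : ℤ) * (⌊θ (j l)⌋ + ⌈θ (j l)⌉) + ((m l : ℤ) - 1)) :=
          Finset.sum_le_sum fun l _ => cz_upper (m l) (hm l) (θ (j l))
      _ = (∑ l : Fin n, (m l : ℤ) * (⌊θ (j l)⌋ + ⌈θ (j l)⌉))
            + ((∑ l : Fin n, (m l : ℤ) * 1) - n) := by
          rw [Finset.sum_add_distrib, Finset.sum_sub_distrib]
          simp [Finset.card_univ]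
      _ = (d : ℤ) * (∑ i : Fin k, (⌊θ i⌋ + ⌈θ i⌉)) + ((d : ℤ) * k - n) := by
          rw [hT1, hT2]
  have hn' : (n : ℤ) = (d : ℤ) * ((k : ℤ) - 1) + 1 + (b : ℤ) := by
    subst hn; push_cast [Nat.cast_sub hk]; ring
  rw [hI, hIbar]
  nlinarith [hSB, hB, hn']
end
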